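/- arXiv:1106.2245 — 2 statements merged into one kernel-verified Lean document; each statement's English description precedes it below -/
import Mathlib

section
/- Suppose that ∫_{[1,∞)} z·log(z) Λ(dz) < ∞. Then the offspring distribution has a finite (k log k)-moment: Σ_{k≥1} p_k · k · log k < ∞. -/
/-!
Conditionally on the lifespan `z`, the number of offspring is Poisson with parameter `l = b z`.
For `N ~ Poisson(l)` one has `E[N log N] = l E[log (N + 1)] ≤ l log (1 + l)` by Jensen's inequality
for the concave logarithm, and this survives truncation of the series because the partial sums of
`E[N - l]` are nonpositive. Integrating against `Λ`, the `k log k`-moment of `(p_k)` is bounded by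
`∫ z log (1 + b z) Λ(dz)`, which is finite because `z log (1 + b z) ≤ log (1 + b) z + z log z`
for `z ≥ 1`.
-/

open MeasureTheory Real Finset

/-- `ProbabilityTheory.poissonPMFReal` with a real parameter, so that it can be composed with
`z ↦ b * z` on all of `ℝ`. -/
noncomputable def poissonWeight (l : ℝ) (k : ℕ) : ℝ :=
  exp (-l) * l ^ k / k.factorial

section PoissonWeight

variable {l : ℝ}

theorem continuous_poissonWeight (k : ℕ) : Continuous fun l => poissonWeight l k := by
  unfold poissonWeight
  fun_prop

theorem poissonWeight_nonneg (hl : 0 ≤ l) (k : ℕ) : 0 ≤ poissonWeight l k := by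
  unfold poissonWeight
  positivity

theorem sum_range_poissonWeight_le_one (hl : 0 ≤ l) (n : ℕ) :
    ∑ k ∈ range n, poissonWeight l k ≤ 1 :=
  calc ∑ k ∈ range n, poissonWeight l k = exp (-l) * ∑ k ∈ range n, l ^ k / k.factorial := by
        simp only [poissonWeight, mul_sum, mul_div_assoc]
    _ ≤ exp (-l) * exp l := by gcongr; exact sum_le_exp_of_nonneg hl n
    _ = 1 := by rw [← exp_add, neg_add_cancel, exp_zero]

theorem poissonWeight_le_one (hl : 0 ≤ l) (k : ℕ) : poissonWeight l k ≤ 1 :=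
  (single_le_sum (fun i _ => poissonWeight_nonneg hl i) (self_mem_range_succ k)).trans
    (sum_range_poissonWeight_le_one hl (k + 1))

theorem poissonWeight_succ_mul (l : ℝ) (k : ℕ) :
    poissonWeight l (k + 1) * (k + 1) = l * poissonWeight l k := by
  simp only [poissonWeight, Nat.factorial_succ, Nat.cast_mul, pow_succ]
  push_cast
  field_simp

theorem sum_range_succ_poissonWeight_mul_sub (l : ℝ) (n : ℕ) :
    ∑ k ∈ range (n + 1), poissonWeight l k * (k - l) = -(l * poissonWeight l n) := by
  induction n with
  | zero => simp [mul_comm]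
  | succ n ih =>
    rw [sum_range_succ, ih, ← poissonWeight_succ_mul]
    push_cast
    ring

theorem sum_range_poissonWeight_mul_sub_nonpos (hl : 0 ≤ l) (n : ℕ) :
    ∑ k ∈ range n, poissonWeight l k * (k - l) ≤ 0 := by
  cases n with
  | zero => simp
  | succ n =>
    rw [sum_range_succ_poissonWeight_mul_sub, neg_nonpos]
    exact mul_nonneg hl (poissonWeight_nonneg hl n)

theorem log_natCast_add_one_le (hl : 0 ≤ l) (k : ℕ) :
    log (k + 1) ≤ log (1 + l) + (k - l) / (1 + l) := by
  have hk : (0 : ℝ) < k + 1 := by positivity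
  have hl' : (0 : ℝ) < 1 + l := by linarith
  have htangent := log_le_sub_one_of_pos (div_pos hk hl')
  rw [log_div hk.ne' hl'.ne', div_sub_one hl'.ne', show (k : ℝ) + 1 - (1 + l) = k - l by ring]
    at htangent
  linarith

theorem sum_range_poissonWeight_mul_mul_log_le (hl : 0 ≤ l) (n : ℕ) :
    ∑ k ∈ range n, poissonWeight l k * (k * log k) ≤ l * log (1 + l) := by
  have hlog : 0 ≤ log (1 + l) := log_nonneg (by linarith)
  cases n with
  | zero => simpa using mul_nonneg hl hlog
  | succ n =>
    have hw := poissonWeight_nonneg hl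
    calc ∑ k ∈ range (n + 1), poissonWeight l k * (k * log k)
        = l * ∑ k ∈ range n, poissonWeight l k * log (k + 1) := by
          rw [sum_range_succ', mul_sum]
          simp only [Nat.cast_add, Nat.cast_one, Nat.cast_zero, zero_mul, mul_zero, add_zero]
          refine sum_congr rfl fun k _ => ?_
          rw [← mul_assoc, poissonWeight_succ_mul, mul_assoc]
      _ ≤ l * ∑ k ∈ range n, poissonWeight l k * (log (1 + l) + (k - l) / (1 + l)) := by
          gcongr with k
          · exact hw k
          · exact log_natCast_add_one_le hl k
      _ = l * (log (1 + l) * ∑ k ∈ range n, poissonWeight l k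
            + (∑ k ∈ range n, poissonWeight l k * (k - l)) / (1 + l)) := by
          rw [sum_div, mul_sum (range n) _ (log (1 + l)), ← sum_add_distrib]
          congr 1
          exact sum_congr rfl fun k _ => by ring
      _ ≤ l * (log (1 + l) * 1 + 0 / (1 + l)) := by
          gcongr
          · exact sum_range_poissonWeight_le_one hl n
          · exact sum_range_poissonWeight_mul_sub_nonpos hl n
      _ = l * log (1 + l) := by rw [mul_one, zero_div, add_zero]

end PoissonWeight

theorem summable_integral_poissonWeight_mul_mul_log {α : Type*} [MeasurableSpace α]
    (μ : Measure α) [IsFiniteMeasure μ] {l : α → ℝ} (hl : AEMeasurable l μ)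
    (hl0 : ∀ᵐ a ∂μ, 0 ≤ l a) (hint : Integrable (fun a => l a * log (1 + l a)) μ) :
    Summable fun k : ℕ => (∫ a, poissonWeight (l a) k ∂μ) * (k * log k) := by
  have hw : ∀ k, Integrable (fun a => poissonWeight (l a) k) μ := fun k =>
    Integrable.of_bound ((continuous_poissonWeight k).measurable.comp_aemeasurable hl
      |>.aestronglyMeasurable) 1 <| hl0.mono fun a ha => by
        rw [Real.norm_of_nonneg (poissonWeight_nonneg ha k)]
        exact poissonWeight_le_one ha k
  refine summable_of_sum_range_le (c := ∫ a, l a * log (1 + l a) ∂μ) (fun k => ?_) fun n => ?_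
  · exact mul_nonneg (integral_nonneg_of_ae (hl0.mono fun a ha => poissonWeight_nonneg ha k))
      (mul_nonneg k.cast_nonneg (log_natCast_nonneg k))
  · calc ∑ k ∈ range n, (∫ a, poissonWeight (l a) k ∂μ) * (k * log k)
        = ∫ a, ∑ k ∈ range n, poissonWeight (l a) k * (k * log k) ∂μ := by
          rw [integral_finsetSum _ fun k _ => (hw k).mul_const _]
          simp only [integral_mul_const]
      _ ≤ ∫ a, l a * log (1 + l a) ∂μ :=
          integral_mono_ae (integrable_finsetSum _ fun k _ => (hw k).mul_const _) hint
            (hl0.mono fun a ha => sum_range_poissonWeight_mul_mul_log_le ha n)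

theorem mul_log_one_add_mul_le {b z : ℝ} (hb : 0 ≤ b) (hz : 0 < z) :
    z * log (1 + b * z) ≤ log (1 + b) * z + (Set.Ici 1).indicator (fun z => z * log z) z := by
  rcases le_or_gt 1 z with h1 | h1
  · rw [Set.indicator_of_mem (Set.mem_Ici.2 h1)]
    have : log (1 + b * z) ≤ log (1 + b) + log z := by
      rw [← log_mul (by positivity) hz.ne']
      exact log_le_log (by positivity) (by nlinarith)
    nlinarith
  · rw [Set.indicator_of_notMem (Set.notMem_Ici.2 h1), add_zero, mul_comm]
    exact mul_le_mul_of_nonneg_right (log_le_log (by positivity) (by nlinarith)) hz.le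

theorem integrableOn_mul_log_one_add_mul {μ : Measure ℝ} {b : ℝ} (hb : 0 ≤ b)
    (hm : IntegrableOn (fun z => z) (Set.Ioi 0) μ)
    (hlog : IntegrableOn (fun z => z * log z) (Set.Ici 1) μ) :
    IntegrableOn (fun z => z * log (1 + b * z)) (Set.Ioi 0) μ := by
  have hdom : IntegrableOn
      (fun z => log (1 + b) * z + (Set.Ici 1).indicator (fun z => z * log z) z) (Set.Ioi 0) μ :=
    (hm.const_mul _).add (hlog.integrable_indicator measurableSet_Ici).integrableOn
  refine hdom.mono' (by fun_prop) (ae_restrict_of_forall_mem measurableSet_Ioi fun z hz => ?_)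
  have hz : (0 : ℝ) < z := hz
  rw [Real.norm_of_nonneg (mul_nonneg hz.le (log_nonneg (by nlinarith)))]
  exact mul_log_one_add_mul_le hb hz

theorem offspring_k_log_k_moment_finite_general
    (Λ : Measure ℝ)
    (b : ℝ) (hb : 0 < b) (hmass : Λ Set.univ = ENNReal.ofReal b)
    (hm : IntegrableOn (fun z => z) (Set.Ioi 0) Λ)
    (p : ℕ → ℝ)
    (hp : ∀ k : ℕ, p k = (1 / b) *
      ∫ z in Set.Ioi 0, Real.exp (-(b * z)) * (b * z) ^ k / (k.factorial : ℝ) ∂Λ)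
    (hlog : IntegrableOn (fun z => z * Real.log z) (Set.Ici 1) Λ) :
    Summable (fun k : ℕ => p k * (k : ℝ) * Real.log k) := by
  have : IsFiniteMeasure Λ := ⟨by simp [hmass]⟩
  have hint : Integrable (fun z => b * z * log (1 + b * z)) (Λ.restrict (Set.Ioi 0)) := by
    simpa only [mul_assoc] using (integrableOn_mul_log_one_add_mul hb.le hm hlog).const_mul b
  have hmixed := summable_integral_poissonWeight_mul_mul_log (Λ.restrict (Set.Ioi 0))
    (by fun_prop) (ae_restrict_of_forall_mem measurableSet_Ioi fun z hz =>
      mul_nonneg hb.le (le_of_lt hz)) hint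
  refine (hmixed.mul_left (1 / b)).congr fun k => ?_
  rw [hp k]
  unfold poissonWeight
  ring

/-- Λ is a nonzero measure on (0,∞) with finite total mass
`b ∈ (0,∞)` and finite first moment. The offspring distribution of the BGW
process embedded in a splitting tree with lifespan measure Λ is
`p k = (1/b) ∫ e^{-bz} (bz)^k / k! Λ(dz)`. If `∫_{[1,∞)} z log z Λ(dz) < ∞`,
then `Σ_k p k * k * log k < ∞`. -/
theorem offspring_k_log_k_moment_finite
    (Λ : Measure ℝ) (hΛ : Λ ≠ 0) (hsupp : Λ (Set.Iic 0) = 0)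
    (b : ℝ) (hb : 0 < b) (hmass : Λ Set.univ = ENNReal.ofReal b)
    (hm : IntegrableOn (fun z => z) (Set.Ioi 0) Λ)
    (p : ℕ → ℝ)
    (hp : ∀ k : ℕ, p k = (1 / b) *
      ∫ z in Set.Ioi 0, Real.exp (-(b * z)) * (b * z) ^ k / (k.factorial : ℝ) ∂Λ)
    (hlog : IntegrableOn (fun z => z * Real.log z) (Set.Ici 1) Λ) :
    Summable (fun k : ℕ => p k * (k : ℝ) * Real.log k) :=
  offspring_k_log_k_moment_finite_general Λ b hb hmass hm p hp hlog
end

section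
/- Assume that β > 0 or Λ ≠ 0, and that ∫_{[1,∞)} dλ/ψ(λ) < ∞. Let v : (0,∞) → (0,∞) be the inverse of the strictly decreasing bijection φ(t) = ∫_t^∞ dλ/ψ(λ) of (0,∞) onto itself. Then for every u ≥ 0, lim_{a→∞} v(a − u)/v(a) = e^{α u}. -/
/-!
Put `s = v a` and `t = v (a - u)`. Then `∫_s^t dλ/ψ(λ) = φ s - φ t = u`, and `s ≤ t → 0` as
`a → ∞`. The jump part of `ψ` is `o(λ)` at `0+` by dominated convergence, so `ψ(λ)/λ → α`;
once `ψ(λ)/λ` is within `ε` of `α` on `[s, t]`, comparing `1/ψ(λ)` with `1/λ` shows that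
`log (t / s) = ∫_s^t dλ/λ` is within `ε u` of `α u`.
-/

open MeasureTheory Real Set Filter Topology

lemma exp_neg_sub_one_add_nonneg (x : ℝ) : 0 ≤ exp (-x) - 1 + x := by
  linarith [add_one_le_exp (-x)]

lemma exp_neg_sub_one_add_pos {x : ℝ} (hx : x ≠ 0) : 0 < exp (-x) - 1 + x := by
  linarith [add_one_lt_exp (neg_ne_zero.2 hx)]

lemma exp_neg_sub_one_add_le_self {x : ℝ} (hx : 0 ≤ x) : exp (-x) - 1 + x ≤ x := by
  linarith [exp_le_one_iff.2 (neg_nonpos.2 hx)]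

lemma exp_neg_sub_one_add_le_sq {x : ℝ} (hx : 0 ≤ x) : exp (-x) - 1 + x ≤ x ^ 2 := by
  have hquad := quadratic_le_exp_of_nonneg hx
  have hinv : exp (-x) * exp x = 1 := by rw [← exp_add, neg_add_cancel, exp_zero]
  nlinarith [exp_pos (-x), mul_le_mul_of_nonneg_left hquad (exp_pos (-x)).le]

lemma monotoneOn_exp_neg_sub_one_add :
    MonotoneOn (fun x : ℝ => exp (-x) - 1 + x) (Ici 0) := by
  intro x hx y _ hxy
  have hsplit : exp (-y) = exp (-x) * exp (-(y - x)) := by rw [← exp_add]; ring_nf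
  have hx1 : exp (-x) ≤ 1 := exp_le_one_iff.2 (neg_nonpos.2 (mem_Ici.1 hx))
  have hd1 : exp (-(y - x)) ≤ 1 := exp_le_one_iff.2 (by linarith)
  dsimp only
  nlinarith [add_one_le_exp (-(y - x)), mul_nonneg (sub_nonneg.2 hx1) (sub_nonneg.2 hd1)]

lemma exp_neg_mul_sub_one_add_le {l r : ℝ} (hl : 0 ≤ l) (hr : 0 ≤ r) :
    exp (-(l * r)) - 1 + l * r ≤ l * max 1 l * min r (r ^ 2) := by
  have hlr : 0 ≤ l * r := mul_nonneg hl hr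
  have h1 : 1 ≤ max 1 l := le_max_left 1 l
  have h2 : l ≤ max 1 l := le_max_right 1 l
  rw [min_def]
  split_ifs
  · nlinarith [exp_neg_sub_one_add_le_self hlr]
  · have := mul_le_mul_of_nonneg_left h2 (mul_nonneg hl (sq_nonneg r))
    nlinarith [exp_neg_sub_one_add_le_sq hlr]

noncomputable def jumpExponent (Λ : Measure ℝ) (l : ℝ) : ℝ :=
  ∫ r in Ioi 0, (exp (-(l * r)) - 1 + l * r) ∂Λ

section jumpExponent

variable {Λ : Measure ℝ}

lemma integrableOn_exp_neg_mul_sub_one_add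
    (hΛ : IntegrableOn (fun r => min r (r ^ 2)) (Ioi 0) Λ) {l : ℝ} (hl : 0 ≤ l) :
    IntegrableOn (fun r => exp (-(l * r)) - 1 + l * r) (Ioi 0) Λ := by
  refine (hΛ.const_mul (l * max 1 l)).mono' (by fun_prop) ?_
  filter_upwards [self_mem_ae_restrict measurableSet_Ioi] with r hr
  rw [norm_of_nonneg (exp_neg_sub_one_add_nonneg _)]
  exact exp_neg_mul_sub_one_add_le hl (le_of_lt hr)

lemma jumpExponent_nonneg (l : ℝ) : 0 ≤ jumpExponent Λ l :=
  setIntegral_nonneg measurableSet_Ioi fun _ _ => exp_neg_sub_one_add_nonneg _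

lemma jumpExponent_pos (hΛ : IntegrableOn (fun r => min r (r ^ 2)) (Ioi 0) Λ)
    (hΛ0 : Λ (Ioi 0) ≠ 0) {l : ℝ} (hl : 0 < l) : 0 < jumpExponent Λ l := by
  rw [jumpExponent, setIntegral_pos_iff_support_of_nonneg_ae
    (ae_of_all _ fun _ => exp_neg_sub_one_add_nonneg _)
    (integrableOn_exp_neg_mul_sub_one_add hΛ hl.le)]
  refine (pos_iff_ne_zero.2 hΛ0).trans_le (measure_mono fun r hr => ⟨?_, hr⟩)
  exact (exp_neg_sub_one_add_pos (mul_pos hl hr).ne').ne'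

lemma monotoneOn_jumpExponent (hΛ : IntegrableOn (fun r => min r (r ^ 2)) (Ioi 0) Λ) :
    MonotoneOn (jumpExponent Λ) (Ici 0) := by
  intro a ha b hb hab
  refine setIntegral_mono_on (integrableOn_exp_neg_mul_sub_one_add hΛ ha)
    (integrableOn_exp_neg_mul_sub_one_add hΛ hb) measurableSet_Ioi fun r hr => ?_
  have hr : 0 ≤ r := le_of_lt hr
  exact monotoneOn_exp_neg_sub_one_add (mul_nonneg ha hr) (mul_nonneg hb hr)
    (mul_le_mul_of_nonneg_right hab hr)

lemma tendsto_jumpExponent_div (hΛ : IntegrableOn (fun r => min r (r ^ 2)) (Ioi 0) Λ) :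
    Tendsto (fun l => jumpExponent Λ l / l) (𝓝[>] 0) (𝓝 0) := by
  have hdom := tendsto_integral_filter_of_dominated_convergence (μ := Λ.restrict (Ioi 0))
    (l := 𝓝[>] (0 : ℝ)) (F := fun l r => (exp (-(l * r)) - 1 + l * r) / l)
    (f := fun _ => 0) (fun r => min r (r ^ 2)) (.of_forall fun l => by fun_prop) ?_ hΛ ?_
  · simpa only [integral_zero, jumpExponent, integral_div] using hdom
  · filter_upwards [Ioc_mem_nhdsGT one_pos] with l hl
    filter_upwards [self_mem_ae_restrict measurableSet_Ioi] with r hr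
    rw [norm_of_nonneg (div_nonneg (exp_neg_sub_one_add_nonneg _) hl.1.le),
      div_le_iff₀ hl.1]
    have := exp_neg_mul_sub_one_add_le hl.1.le (le_of_lt hr)
    rwa [max_eq_left hl.2, mul_one, mul_comm l (min _ _)] at this
  · filter_upwards [self_mem_ae_restrict measurableSet_Ioi] with r hr
    have hsq : Tendsto (fun l : ℝ => l * r ^ 2) (𝓝[>] 0) (𝓝 0) := by
      have := ((continuous_mul_const (r ^ 2)).tendsto 0).mono_left (nhdsWithin_le_nhds (s := Ioi 0))
      rwa [zero_mul] at this
    refine squeeze_zero' ?_ ?_ hsq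
    · filter_upwards [self_mem_nhdsWithin] with l hl
      exact div_nonneg (exp_neg_sub_one_add_nonneg _) (le_of_lt hl)
    · filter_upwards [self_mem_nhdsWithin] with l (hl : 0 < l)
      rw [div_le_iff₀ hl]
      nlinarith [exp_neg_sub_one_add_le_sq (mul_nonneg hl.le (le_of_lt hr))]

end jumpExponent

noncomputable def laplaceExponent (Λ : Measure ℝ) (α β l : ℝ) : ℝ :=
  α * l + β * l ^ 2 + jumpExponent Λ l

section laplaceExponent

variable {Λ : Measure ℝ} {α β : ℝ}

lemma laplaceExponent_pos (hα : 0 ≤ α) (hβ : 0 ≤ β)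
    (hΛ : IntegrableOn (fun r => min r (r ^ 2)) (Ioi 0) Λ) (hpos : 0 < β ∨ Λ (Ioi 0) ≠ 0)
    {l : ℝ} (hl : 0 < l) : 0 < laplaceExponent Λ α β l := by
  have hαl : 0 ≤ α * l := mul_nonneg hα hl.le
  unfold laplaceExponent
  rcases hpos with hβ' | hΛ0
  · have : 0 < β * l ^ 2 := by positivity
    linarith [jumpExponent_nonneg (Λ := Λ) l]
  · have : 0 ≤ β * l ^ 2 := by positivity
    linarith [jumpExponent_pos hΛ hΛ0 hl]

lemma monotoneOn_laplaceExponent (hα : 0 ≤ α) (hβ : 0 ≤ β)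
    (hΛ : IntegrableOn (fun r => min r (r ^ 2)) (Ioi 0) Λ) :
    MonotoneOn (laplaceExponent Λ α β) (Ici 0) := by
  intro a ha b hb hab
  have hsq : a ^ 2 ≤ b ^ 2 := pow_le_pow_left₀ ha hab 2
  have := monotoneOn_jumpExponent hΛ ha hb hab
  unfold laplaceExponent
  gcongr

lemma tendsto_laplaceExponent_div (hΛ : IntegrableOn (fun r => min r (r ^ 2)) (Ioi 0) Λ) :
    Tendsto (fun l => laplaceExponent Λ α β l / l) (𝓝[>] 0) (𝓝 α) := by
  have hlin : Tendsto (fun l => α + β * l) (𝓝[>] 0) (𝓝 α) := by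
    exact ((by fun_prop : Continuous fun l => α + β * l).tendsto' 0 α (by simp)).mono_left
      nhdsWithin_le_nhds
  have hsum := hlin.add (tendsto_jumpExponent_div hΛ)
  rw [add_zero] at hsum
  refine hsum.congr' ?_
  filter_upwards [self_mem_nhdsWithin] with l (hl : 0 < l)
  rw [laplaceExponent]
  field_simp

end laplaceExponent

lemma tendsto_nhdsGT_zero_of_strictAntiOn {φ v : ℝ → ℝ} (hφ : StrictAntiOn φ (Ioi 0))
    (hv : ∀ a, 0 < a → 0 < v a ∧ φ (v a) = a) : Tendsto v atTop (𝓝[>] 0) := by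
  refine tendsto_nhdsWithin_iff.2 ⟨tendsto_order.2 ⟨fun b hb => ?_, fun b hb => ?_⟩, ?_⟩
  · filter_upwards [eventually_gt_atTop 0] with a ha
    exact hb.trans (hv a ha).1
  · filter_upwards [eventually_gt_atTop (max 0 (φ b))] with a ha
    have ha0 : 0 < a := (le_max_left _ _).trans_lt ha
    by_contra! hba
    have := hφ.antitoneOn hb (hv a ha0).1 hba
    rw [(hv a ha0).2] at this
    exact (le_max_right _ _).not_gt (ha.trans_le this)
  · filter_upwards [eventually_gt_atTop 0] with a ha
    exact (hv a ha).1

section inverseOfIntegralTail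

variable {ψ : ℝ → ℝ}

lemma integrableOn_inv_Ioi (hψpos : ∀ l, 0 < l → 0 < ψ l) (hψmono : MonotoneOn ψ (Ioi 0))
    (hint : IntegrableOn (fun l => (ψ l)⁻¹) (Ici 1)) {t : ℝ} (ht : 0 < t) :
    IntegrableOn (fun l => (ψ l)⁻¹) (Ioi t) := by
  have hanti : AntitoneOn (fun l => (ψ l)⁻¹) (uIcc t (max t 1)) := by
    rw [uIcc_of_le (le_max_left t 1)]
    intro a ha b hb hab
    have ha0 : 0 < a := ht.trans_le ha.1
    exact inv_anti₀ (hψpos a ha0) (hψmono ha0 (ha0.trans_le hab) hab)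
  rw [← Ioc_union_Ioi_eq_Ioi (le_max_left t 1)]
  exact ((intervalIntegrable_iff_integrableOn_Ioc_of_le (le_max_left t 1)).1
    hanti.intervalIntegrable).union (hint.mono_set fun l hl => (le_max_right t 1).trans hl.le)

lemma strictAntiOn_integral_Ioi_inv (hψpos : ∀ l, 0 < l → 0 < ψ l)
    (hψmono : MonotoneOn ψ (Ioi 0)) (hint : IntegrableOn (fun l => (ψ l)⁻¹) (Ici 1)) :
    StrictAntiOn (fun t => ∫ l in Ioi t, (ψ l)⁻¹) (Ioi 0) := by
  intro s (hs : 0 < s) t _ hst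
  have hsub := intervalIntegral.integral_Ioi_sub_Ioi
    (integrableOn_inv_Ioi hψpos hψmono hint hs) hst.le
  have hpos : 0 < ∫ l in s..t, (ψ l)⁻¹ :=
    intervalIntegral.intervalIntegral_pos_of_pos_on
      ((intervalIntegrable_iff_integrableOn_Ioc_of_le hst.le).2
        ((integrableOn_inv_Ioi hψpos hψmono hint hs).mono_set Ioc_subset_Ioi_self))
      (fun l hl => inv_pos.2 (hψpos l (hs.trans hl.1))) hst
  dsimp only
  linarith

lemma abs_log_div_sub_mul_integral_inv_le {s t α ε : ℝ} (hs : 0 < s) (hst : s ≤ t)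
    (hψpos : ∀ l ∈ Icc s t, 0 < ψ l) (hint : IntervalIntegrable (fun l => (ψ l)⁻¹) volume s t)
    (hψα : ∀ l ∈ Icc s t, |ψ l / l - α| ≤ ε) :
    |log (t / s) - α * ∫ l in s..t, (ψ l)⁻¹| ≤ ε * ∫ l in s..t, (ψ l)⁻¹ := by
  have hinv : IntervalIntegrable (fun l : ℝ => l⁻¹) volume s t :=
    intervalIntegral.intervalIntegrable_inv
      (fun l hl => (hs.trans_le (uIcc_of_le hst ▸ hl).1).ne') continuousOn_id
  have hbounds : ∀ l ∈ Icc s t, α - ε ≤ l⁻¹ * ψ l ∧ l⁻¹ * ψ l ≤ α + ε := fun l hl => by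
    rw [inv_mul_eq_div]
    constructor <;> linarith [abs_le.1 (hψα l hl)]
  have hlower : (α - ε) * ∫ l in s..t, (ψ l)⁻¹ ≤ ∫ l in s..t, l⁻¹ := by
    rw [← intervalIntegral.integral_const_mul]
    refine intervalIntegral.integral_mono_on hst (hint.const_mul _) hinv fun l hl => ?_
    rw [← div_eq_mul_inv, div_le_iff₀ (hψpos l hl)]
    exact (hbounds l hl).1
  have hupper : ∫ l in s..t, l⁻¹ ≤ (α + ε) * ∫ l in s..t, (ψ l)⁻¹ := by
    rw [← intervalIntegral.integral_const_mul]
    refine intervalIntegral.integral_mono_on hst hinv (hint.const_mul _) fun l hl => ?_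
    rw [← div_eq_mul_inv, le_div_iff₀ (hψpos l hl)]
    exact (hbounds l hl).2
  rw [← integral_inv_of_pos hs (hs.trans_le hst), abs_sub_le_iff]
  constructor <;> linarith

end inverseOfIntegralTail

theorem tendsto_shift_div_of_tendsto_div_self {ψ φ v : ℝ → ℝ} {α u : ℝ}
    (hψpos : ∀ l, 0 < l → 0 < ψ l) (hψmono : MonotoneOn ψ (Ioi 0))
    (hint : IntegrableOn (fun l => (ψ l)⁻¹) (Ici 1))
    (hψα : Tendsto (fun l => ψ l / l) (𝓝[>] 0) (𝓝 α))
    (hφ : ∀ t, φ t = ∫ l in Ioi t, (ψ l)⁻¹) (hv : ∀ a, 0 < a → 0 < v a ∧ φ (v a) = a)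
    (hu : 0 ≤ u) : Tendsto (fun a => v (a - u) / v a) atTop (𝓝 (exp (α * u))) := by
  obtain rfl : φ = fun t => ∫ l in Ioi t, (ψ l)⁻¹ := funext hφ
  have hanti := strictAntiOn_integral_Ioi_inv hψpos hψmono hint
  have hvu : Tendsto (fun a => v (a - u)) atTop (𝓝[>] 0) :=
    (tendsto_nhdsGT_zero_of_strictAntiOn hanti hv).comp (tendsto_atTop_add_const_right _ _ tendsto_id)
  have hstep : ∀ᶠ a in atTop, 0 < v a ∧ v a ≤ v (a - u) ∧
      ∫ l in v a..v (a - u), (ψ l)⁻¹ = u := by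
    filter_upwards [eventually_gt_atTop u] with a hau
    obtain ⟨hva, hφa⟩ := hv a (hu.trans_lt hau)
    obtain ⟨hvau, hφau⟩ := hv (a - u) (sub_pos.2 hau)
    have hle : v a ≤ v (a - u) := (hanti.le_iff_ge hvau hva).1 (by linarith)
    refine ⟨hva, hle, ?_⟩
    rw [← intervalIntegral.integral_Ioi_sub_Ioi (integrableOn_inv_Ioi hψpos hψmono hint hva) hle]
    linarith
  have hlog : Tendsto (fun a => log (v (a - u) / v a)) atTop (𝓝 (α * u)) := by
    refine Metric.tendsto_nhds.2 fun ε hε => ?_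
    have hε' : 0 < ε / (u + 1) := by positivity
    obtain ⟨δ, hδ, hnear⟩ := mem_nhdsGT_iff_exists_Ioo_subset.1
      (Metric.tendsto_nhds.1 hψα _ hε')
    filter_upwards [hstep, hvu (Ioo_mem_nhdsGT hδ)] with a ⟨hva, hle, hu_eq⟩ hvau
    have hbound := abs_log_div_sub_mul_integral_inv_le (ψ := ψ) (α := α) hva hle
      (fun l hl => hψpos l (hva.trans_le hl.1))
      ((intervalIntegrable_iff_integrableOn_Ioc_of_le hle).2
        ((integrableOn_inv_Ioi hψpos hψmono hint hva).mono_set Ioc_subset_Ioi_self))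
      (fun l hl => (hnear ⟨hva.trans_le hl.1, hl.2.trans_lt hvau.2⟩).le)
    rw [hu_eq] at hbound
    rw [Real.dist_eq]
    calc |log (v (a - u) / v a) - α * u| ≤ ε / (u + 1) * u := hbound
      _ < ε := by rw [div_mul_eq_mul_div, div_lt_iff₀ (by positivity)]; nlinarith
  refine ((continuous_exp.tendsto _).comp hlog).congr' ?_
  filter_upwards [hstep] with a ⟨hva, hle, _⟩
  exact exp_log (div_pos (hva.trans_le hle) hva)

theorem v_ratio_tendsto_exp_general
    (Λ : Measure ℝ)
    (hΛ : ∫⁻ r in Set.Ioi 0, ENNReal.ofReal (min r (r ^ 2)) ∂Λ < ⊤)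
    (α β : ℝ) (hα : 0 ≤ α) (hβ : 0 ≤ β)
    (ψ : ℝ → ℝ)
    (hψ : ∀ l : ℝ, ψ l = α * l + β * l ^ 2 +
      ∫ r in Set.Ioi 0, (Real.exp (-(l * r)) - 1 + l * r) ∂Λ)
    (hpos : 0 < β ∨ Λ (Set.Ioi 0) ≠ 0)
    (hint : IntegrableOn (fun l => (ψ l)⁻¹) (Set.Ici 1) volume)
    (φ : ℝ → ℝ)
    (hφ : ∀ t : ℝ, φ t = ∫ l in Set.Ioi t, (ψ l)⁻¹ ∂volume)
    (v : ℝ → ℝ)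
    (hv : ∀ a : ℝ, 0 < a → 0 < v a ∧ φ (v a) = a) :
    ∀ u : ℝ, 0 ≤ u →
      Filter.Tendsto (fun a => v (a - u) / v a) Filter.atTop
        (nhds (Real.exp (α * u))) := by
  intro u hu
  have hΛ' : IntegrableOn (fun r => min r (r ^ 2)) (Ioi 0) Λ :=
    (lintegral_ofReal_ne_top_iff_integrable (by fun_prop)
      (ae_restrict_of_forall_mem measurableSet_Ioi fun r (hr : 0 < r) => by positivity)).1 hΛ.ne
  obtain rfl : ψ = laplaceExponent Λ α β := funext hψ
  exact tendsto_shift_div_of_tendsto_div_self (fun l => laplaceExponent_pos hα hβ hΛ' hpos)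
    ((monotoneOn_laplaceExponent hα hβ hΛ').mono Ioi_subset_Ici_self) hint
    (tendsto_laplaceExponent_div hΛ') hφ hv hu

/-- Infinite-variation case. Assume `β > 0` or `Λ ≠ 0`,
and `∫_{[1,∞)} dλ/ψ(λ) < ∞`. Let `v : (0,∞) → (0,∞)` be the inverse of the
strictly decreasing bijection `φ(t) = ∫_t^∞ dλ/ψ(λ)` of `(0,∞)` onto
itself. Then for every `u ≥ 0`, `v(a − u)/v(a) → e^{αu}` as `a → ∞`. -/
theorem v_ratio_tendsto_exp
    (Λ : Measure ℝ) (hsupp : Λ (Set.Iic 0) = 0)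
    (hΛ : ∫⁻ r in Set.Ioi 0, ENNReal.ofReal (min r (r ^ 2)) ∂Λ < ⊤)
    (α β : ℝ) (hα : 0 ≤ α) (hβ : 0 ≤ β)
    (ψ : ℝ → ℝ)
    (hψ : ∀ l : ℝ, ψ l = α * l + β * l ^ 2 +
      ∫ r in Set.Ioi 0, (Real.exp (-(l * r)) - 1 + l * r) ∂Λ)
    (hpos : 0 < β ∨ Λ (Set.Ioi 0) ≠ 0)
    (hint : IntegrableOn (fun l => (ψ l)⁻¹) (Set.Ici 1) volume)
    (φ : ℝ → ℝ)
    (hφ : ∀ t : ℝ, φ t = ∫ l in Set.Ioi t, (ψ l)⁻¹ ∂volume)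
    (v : ℝ → ℝ)
    (hv : ∀ a : ℝ, 0 < a → 0 < v a ∧ φ (v a) = a) :
    ∀ u : ℝ, 0 ≤ u →
      Filter.Tendsto (fun a => v (a - u) / v a) Filter.atTop
        (nhds (Real.exp (α * u))) :=
  v_ratio_tendsto_exp_general Λ hΛ α β hα hβ ψ hψ hpos hint φ hφ v hv
end
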